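/- Let X be a directed space with a continuous binary infimum operation ∧ (i.e., X is a directed deflationary semilattice). Define on the directed lower powerspace P_L(X) = (LX, ∪) the operation ↓F₁ ⊓ ↓F₂ = ↓{a ∧ b : a ∈ F₁, b ∈ F₂}. Then ⊓ is well-defined, idempotent, associative, commutative, deflationary, and together with ∪ satisfies both distributive laws: ↓F₁ ⊓ (↓F₂ ∪ ↓F₃) = (↓F₁ ⊓ ↓F₂) ∪ (↓F₁ ⊓ ↓F₃) and ↓F₁ ∪ (↓F₂ ⊓ ↓F₃) = (↓F₁ ∪ ↓F₂) ⊓ (↓F₁ ∪ ↓F₃). -/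

import Mathlib

/-!
Since `m` is a greatest lower bound for the specialization preorder, it is monotone, and
idempotent, commutative and associative up to that preorder. An inclusion `↓A ⊆ ↓B` holds as soon
as every element of `A` lies below one of `B`, so each identity reduces to comparing meets of
generators; well-definedness comes from `↓{a ∧ b : a ∈ ↓A, b ∈ ↓B} = ↓{a ∧ b : a ∈ A, b ∈ B}`.
-/

variable {X : Type*}

/-- The specialization order: `x ⊑ y` iff `x ∈ closure {y}`. -/
def sle [TopologicalSpace X] (x y : X) : Prop := x ∈ closure {y}

/-- A directed subset with respect to the specialization order. -/
def IsDirSet [TopologicalSpace X] (D : Set X) : Prop :=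
  D.Nonempty ∧ ∀ a ∈ D, ∀ b ∈ D, ∃ c ∈ D, sle a c ∧ sle b c

/-- `DConv D x`: the directed set `D`, viewed as a net (indexed by itself with
the specialization order), converges to `x`. -/
def DConv [TopologicalSpace X] (D : Set X) (x : X) : Prop :=
  IsDirSet D ∧ ∀ U : Set X, IsOpen U → x ∈ U → ∃ d ∈ D, ∀ e ∈ D, sle d e → e ∈ U

/-- Directed open set. -/
def DOpen [TopologicalSpace X] (U : Set X) : Prop :=
  ∀ D : Set X, ∀ x : X, DConv D x → x ∈ U → (D ∩ U).Nonempty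

/-- A directed space: every directed open set is open. -/
def IsDirectedSpace (X : Type*) [TopologicalSpace X] : Prop :=
  ∀ U : Set X, DOpen U → IsOpen U

/-- Down-closure with respect to the specialization order. -/
def dcl [TopologicalSpace X] (F : Set X) : Set X := {x | ∃ a ∈ F, sle x a}

/-- Membership in `LX`: down-closures of nonempty finite sets. -/
def InLX [TopologicalSpace X] (A : Set X) : Prop :=
  ∃ F : Finset X, F.Nonempty ∧ A = dcl (F : Set X)

/-- A directed (under inclusion) family of elements of `LX`. -/
def LDir [TopologicalSpace X] (𝒟 : Set (Set X)) : Prop :=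
  (∀ B ∈ 𝒟, InLX B) ∧ 𝒟.Nonempty ∧ ∀ A ∈ 𝒟, ∀ B ∈ 𝒟, ∃ C ∈ 𝒟, A ⊆ C ∧ B ⊆ C

/-- The convergence `𝒟 ⇒_L ↓F`. -/
def LConv [TopologicalSpace X] (𝒟 : Set (Set X)) (A : Set X) : Prop :=
  LDir 𝒟 ∧ ∃ F : Finset X, F.Nonempty ∧ A = dcl (F : Set X) ∧
    ∀ a ∈ F, ∃ D : Set X, D ⊆ ⋃₀ 𝒟 ∧ DConv D a

/-- `⇒_L`-convergence open subsets of `LX`. -/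
def LOpen [TopologicalSpace X] (𝒰 : Set (Set X)) : Prop :=
  (∀ A ∈ 𝒰, InLX A) ∧ ∀ 𝒟 A, LConv 𝒟 A → A ∈ 𝒰 → (𝒟 ∩ 𝒰).Nonempty

/-- Pointwise meet of two sets: `{a ∧ b : a ∈ F, b ∈ G}`. -/
def msetOf {X : Type*} (m : X → X → X) (F G : Set X) : Set X :=
  {z | ∃ a ∈ F, ∃ b ∈ G, z = m a b}

lemma msetOf_eq_image2 (m : X → X → X) (A B : Set X) : msetOf m A B = Set.image2 m A B := by
  ext z
  simp only [msetOf, Set.mem_image2, Set.mem_ofPred_eq, eq_comm]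

section Specialization

variable [TopologicalSpace X]

lemma sle_refl (x : X) : sle x x := subset_closure rfl

lemma sle_trans {x y z : X} (hxy : sle x y) (hyz : sle y z) : sle x z :=
  specializes_iff_mem_closure.1
    ((specializes_iff_mem_closure.2 hyz).trans (specializes_iff_mem_closure.2 hxy))

lemma subset_dcl (A : Set X) : A ⊆ dcl A := fun a ha => ⟨a, ha, sle_refl a⟩

lemma dcl_subset_dcl_iff {A B : Set X} : dcl A ⊆ dcl B ↔ ∀ a ∈ A, ∃ b ∈ B, sle a b := by
  refine ⟨fun h a ha => h (subset_dcl A ha), fun h x ⟨a, ha, hxa⟩ => ?_⟩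
  obtain ⟨b, hb, hab⟩ := h a ha
  exact ⟨b, hb, sle_trans hxa hab⟩

lemma dcl_union (A B : Set X) : dcl (A ∪ B) = dcl A ∪ dcl B := by
  ext x
  simp only [dcl, Set.mem_union, Set.mem_ofPred_eq, or_and_right, exists_or]

lemma dcl_msetOf_union_right (m : X → X → X) (A B C : Set X) :
    dcl (msetOf m A (B ∪ C)) = dcl (msetOf m A B) ∪ dcl (msetOf m A C) := by
  simp only [msetOf_eq_image2, Set.image2_union_right, dcl_union]

def IsSpecializationInf (m : X → X → X) : Prop :=
  ∀ a b : X, sle (m a b) a ∧ sle (m a b) b ∧ ∀ c : X, sle c a → sle c b → sle c (m a b)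

namespace IsSpecializationInf

variable {m : X → X → X} (hm : IsSpecializationInf m)
include hm

lemma left_le (a b : X) : sle (m a b) a := (hm a b).1

lemma right_le (a b : X) : sle (m a b) b := (hm a b).2.1

lemma le_inf {a b c : X} (ha : sle c a) (hb : sle c b) : sle c (m a b) := (hm a b).2.2 c ha hb

lemma mono {a a' b b' : X} (ha : sle a a') (hb : sle b b') : sle (m a b) (m a' b') :=
  hm.le_inf (sle_trans (hm.left_le a b) ha) (sle_trans (hm.right_le a b) hb)

lemma le_self (a : X) : sle a (m a a) := hm.le_inf (sle_refl a) (sle_refl a)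

lemma comm_le (a b : X) : sle (m a b) (m b a) := hm.le_inf (hm.right_le a b) (hm.left_le a b)

lemma assoc_le (a b c : X) : sle (m (m a b) c) (m a (m b c)) :=
  hm.le_inf (sle_trans (hm.left_le _ c) (hm.left_le a b))
    (hm.mono (hm.right_le a b) (sle_refl c))

lemma le_assoc (a b c : X) : sle (m a (m b c)) (m (m a b) c) :=
  hm.le_inf (hm.mono (sle_refl a) (hm.left_le b c))
    (sle_trans (hm.right_le a _) (hm.right_le b c))

lemma dcl_msetOf_dcl (A B : Set X) : dcl (msetOf m (dcl A) (dcl B)) = dcl (msetOf m A B) := by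
  refine subset_antisymm (dcl_subset_dcl_iff.2 ?_) (dcl_subset_dcl_iff.2 ?_)
  · rintro _ ⟨a, ⟨a', ha', haa'⟩, b, ⟨b', hb', hbb'⟩, rfl⟩
    exact ⟨m a' b', ⟨a', ha', b', hb', rfl⟩, hm.mono haa' hbb'⟩
  · rintro _ ⟨a, ha, b, hb, rfl⟩
    exact ⟨m a b, ⟨a, subset_dcl A ha, b, subset_dcl B hb, rfl⟩, sle_refl _⟩

lemma dcl_msetOf_congr {A A' B B' : Set X} (hA : dcl A = dcl A') (hB : dcl B = dcl B') :
    dcl (msetOf m A B) = dcl (msetOf m A' B') := by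
  rw [← hm.dcl_msetOf_dcl, hA, hB, hm.dcl_msetOf_dcl]

lemma dcl_msetOf_subset_left (A B : Set X) : dcl (msetOf m A B) ⊆ dcl A :=
  dcl_subset_dcl_iff.2 fun _ ⟨a, ha, b, _, hz⟩ => ⟨a, ha, hz ▸ hm.left_le a b⟩

lemma dcl_msetOf_self (A : Set X) : dcl (msetOf m A A) = dcl A := by
  refine subset_antisymm (hm.dcl_msetOf_subset_left A A) (dcl_subset_dcl_iff.2 ?_)
  exact fun a ha => ⟨m a a, ⟨a, ha, a, ha, rfl⟩, hm.le_self a⟩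

lemma dcl_msetOf_comm (A B : Set X) : dcl (msetOf m A B) = dcl (msetOf m B A) := by
  refine subset_antisymm (dcl_subset_dcl_iff.2 ?_) (dcl_subset_dcl_iff.2 ?_)
  · rintro _ ⟨a, ha, b, hb, rfl⟩
    exact ⟨m b a, ⟨b, hb, a, ha, rfl⟩, hm.comm_le a b⟩
  · rintro _ ⟨b, hb, a, ha, rfl⟩
    exact ⟨m a b, ⟨a, ha, b, hb, rfl⟩, hm.comm_le b a⟩

lemma dcl_msetOf_assoc (A B C : Set X) :
    dcl (msetOf m (msetOf m A B) C) = dcl (msetOf m A (msetOf m B C)) := by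
  refine subset_antisymm (dcl_subset_dcl_iff.2 ?_) (dcl_subset_dcl_iff.2 ?_)
  · rintro _ ⟨_, ⟨a, ha, b, hb, rfl⟩, c, hc, rfl⟩
    exact ⟨m a (m b c), ⟨a, ha, m b c, ⟨b, hb, c, hc, rfl⟩, rfl⟩, hm.assoc_le a b c⟩
  · rintro _ ⟨a, ha, _, ⟨b, hb, c, hc, rfl⟩, rfl⟩
    exact ⟨m (m a b) c, ⟨m a b, ⟨a, ha, b, hb, rfl⟩, c, hc, rfl⟩, hm.le_assoc a b c⟩

lemma dcl_union_msetOf (A B C : Set X) :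
    dcl (A ∪ msetOf m B C) = dcl (msetOf m (A ∪ B) (A ∪ C)) := by
  refine subset_antisymm (dcl_subset_dcl_iff.2 ?_) (dcl_subset_dcl_iff.2 ?_)
  · rintro x (ha | ⟨b, hb, c, hc, rfl⟩)
    · exact ⟨m x x, ⟨x, Or.inl ha, x, Or.inl ha, rfl⟩, hm.le_self x⟩
    · exact ⟨m b c, ⟨b, Or.inr hb, c, Or.inr hc, rfl⟩, sle_refl _⟩
  · rintro _ ⟨a, ha | hb, c, hc, rfl⟩
    · exact ⟨a, Or.inl ha, hm.left_le a c⟩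
    rcases hc with ha | hc
    · exact ⟨c, Or.inl ha, hm.right_le a c⟩
    · exact ⟨m a c, Or.inr ⟨a, hb, c, hc, rfl⟩, sle_refl _⟩

end IsSpecializationInf

end Specialization

theorem stmt_18_general [TopologicalSpace X]
    (m : X → X → X)
    (hm : ∀ a b : X, sle (m a b) a ∧ sle (m a b) b ∧
      ∀ c : X, sle c a → sle c b → sle c (m a b)) :
    (∀ F₁ F₂ G₁ G₂ : Finset X, F₁.Nonempty → F₂.Nonempty → G₁.Nonempty → G₂.Nonempty →
        dcl (F₁ : Set X) = dcl (F₂ : Set X) → dcl (G₁ : Set X) = dcl (G₂ : Set X) →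
        dcl (msetOf m (F₁ : Set X) (G₁ : Set X)) = dcl (msetOf m (F₂ : Set X) (G₂ : Set X))) ∧
    (∀ F : Finset X, F.Nonempty →
        dcl (msetOf m (F : Set X) (F : Set X)) = dcl (F : Set X)) ∧
    (∀ F G H : Finset X, F.Nonempty → G.Nonempty → H.Nonempty →
        dcl (msetOf m (msetOf m (F : Set X) (G : Set X)) (H : Set X)) =
          dcl (msetOf m (F : Set X) (msetOf m (G : Set X) (H : Set X)))) ∧
    (∀ F G : Finset X, F.Nonempty → G.Nonempty →
        dcl (msetOf m (F : Set X) (G : Set X)) = dcl (msetOf m (G : Set X) (F : Set X))) ∧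
    (∀ F G : Finset X, F.Nonempty → G.Nonempty →
        dcl (msetOf m (F : Set X) (G : Set X)) ⊆ dcl (F : Set X)) ∧
    (∀ F G H : Finset X, F.Nonempty → G.Nonempty → H.Nonempty →
        dcl (msetOf m (F : Set X) ((G : Set X) ∪ (H : Set X))) =
          dcl (msetOf m (F : Set X) (G : Set X)) ∪ dcl (msetOf m (F : Set X) (H : Set X))) ∧
    (∀ F G H : Finset X, F.Nonempty → G.Nonempty → H.Nonempty →
        dcl ((F : Set X) ∪ msetOf m (G : Set X) (H : Set X)) =
          dcl (msetOf m ((F : Set X) ∪ (G : Set X)) ((F : Set X) ∪ (H : Set X)))) := by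
  have hinf : IsSpecializationInf m := hm
  exact ⟨fun _ _ _ _ _ _ _ _ hF hG => hinf.dcl_msetOf_congr hF hG,
    fun F _ => hinf.dcl_msetOf_self F,
    fun F G H _ _ _ => hinf.dcl_msetOf_assoc F G H,
    fun F G _ _ => hinf.dcl_msetOf_comm F G,
    fun F G _ _ => hinf.dcl_msetOf_subset_left F G,
    fun F G H _ _ _ => dcl_msetOf_union_right m F G H,
    fun F G H _ _ _ => hinf.dcl_union_msetOf F G H⟩

/-- if `X` is a directed deflationary semilattice (`∧` is a
continuous binary infimum operation), then the meet `↓F₁ ⊓ ↓F₂ = ↓{a ∧ b}`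
on the lower powerspace `P_L(X)` is well-defined, idempotent, associative,
commutative, deflationary and distributes over union in both ways. -/
theorem stmt_18 [TopologicalSpace X] [T0Space X] (hX : IsDirectedSpace X)
    (m : X → X → X)
    (hc1 : ∀ y : X, Continuous fun x => m x y)
    (hc2 : ∀ x : X, Continuous fun y => m x y)
    (hm : ∀ a b : X, sle (m a b) a ∧ sle (m a b) b ∧
      ∀ c : X, sle c a → sle c b → sle c (m a b)) :
    (∀ F₁ F₂ G₁ G₂ : Finset X, F₁.Nonempty → F₂.Nonempty → G₁.Nonempty → G₂.Nonempty →
        dcl (F₁ : Set X) = dcl (F₂ : Set X) → dcl (G₁ : Set X) = dcl (G₂ : Set X) →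
        dcl (msetOf m (F₁ : Set X) (G₁ : Set X)) = dcl (msetOf m (F₂ : Set X) (G₂ : Set X))) ∧
    (∀ F : Finset X, F.Nonempty →
        dcl (msetOf m (F : Set X) (F : Set X)) = dcl (F : Set X)) ∧
    (∀ F G H : Finset X, F.Nonempty → G.Nonempty → H.Nonempty →
        dcl (msetOf m (msetOf m (F : Set X) (G : Set X)) (H : Set X)) =
          dcl (msetOf m (F : Set X) (msetOf m (G : Set X) (H : Set X)))) ∧
    (∀ F G : Finset X, F.Nonempty → G.Nonempty →
        dcl (msetOf m (F : Set X) (G : Set X)) = dcl (msetOf m (G : Set X) (F : Set X))) ∧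
    (∀ F G : Finset X, F.Nonempty → G.Nonempty →
        dcl (msetOf m (F : Set X) (G : Set X)) ⊆ dcl (F : Set X)) ∧
    (∀ F G H : Finset X, F.Nonempty → G.Nonempty → H.Nonempty →
        dcl (msetOf m (F : Set X) ((G : Set X) ∪ (H : Set X))) =
          dcl (msetOf m (F : Set X) (G : Set X)) ∪ dcl (msetOf m (F : Set X) (H : Set X))) ∧
    (∀ F G H : Finset X, F.Nonempty → G.Nonempty → H.Nonempty →
        dcl ((F : Set X) ∪ msetOf m (G : Set X) (H : Set X)) =
          dcl (msetOf m ((F : Set X) ∪ (G : Set X)) ((F : Set X) ∪ (H : Set X)))) :=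
  stmt_18_general m hm
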